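/- arXiv:0712.0492 — 3 statements merged into one kernel-verified Lean document; each statement's English description precedes it below -/
import Mathlib

section
/- Let f be a bounded analytic function on the right half-plane Re s > 0 whose nontangential boundary values f(it) exist for almost every t. Then for every positive integer n, a_n = lim_{T→∞} (1/T) ∫_0^T f(it) n^{it} dt, where a_n is the n-th coefficient of the Dirichlet series representation of f, assuming f is represented by a convergent Dirichlet series ∑ a_n n^{-s} in some half-plane Re s > σ_0. -/
open MeasureTheory Filter Complex Real Topology
open scoped Interval

/-!
On a vertical line `Re s = σ` of absolute convergence, `f(s) n^s = ∑ₘ aₘ (n/m)^s`, and the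
characters `t ↦ (n/m)^{it}` have mean value `δₘₙ` over `[0, T]` as `T → ∞`; dominated convergence
for the series shows that the mean of `f(σ+it) n^{σ+it}` tends to `aₙ`. Cauchy's theorem on the
rectangle `[ε, σ] × [0, T]`, applied to the bounded function `f(s) n^s`, shows that its integrals
over `[0, T]` along `Re s = ε` and along `Re s = σ` differ by at most `2 σ n^σ sup |f|`, uniformly
in `T`. Letting `ε → 0` (dominated convergence again) the same bound holds with the boundary
values in place of the line `Re s = ε`, and a bounded error disappears after division by `T`.
-/

noncomputable def cesaroMean (g : ℝ → ℂ) (T : ℝ) : ℂ :=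
  (1 / (T : ℂ)) * ∫ t in (0 : ℝ)..T, g t

theorem cesaroMean_const_mul (c : ℂ) (g : ℝ → ℂ) :
    cesaroMean (fun t => c * g t) = fun T => c * cesaroMean g T := by
  ext T
  simp only [cesaroMean, intervalIntegral.integral_const_mul]
  ring

theorem norm_cesaroMean_le {g : ℝ → ℂ} {M : ℝ} (hg : ∀ t, ‖g t‖ ≤ M) (T : ℝ) :
    ‖cesaroMean g T‖ ≤ M := by
  have hM : 0 ≤ M := (norm_nonneg _).trans (hg 0)
  rcases eq_or_ne T 0 with rfl | hT
  · simpa [cesaroMean] using hM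
  calc ‖cesaroMean g T‖ ≤ |T|⁻¹ * (M * |T - 0|) := by
        rw [cesaroMean, norm_mul, one_div, norm_inv, norm_real, Real.norm_eq_abs]
        gcongr
        exact intervalIntegral.norm_integral_le_of_norm_le_const fun t _ => hg t
    _ = M := by rw [sub_zero]; field_simp

theorem tendsto_cesaroMean_const (c : ℂ) :
    Tendsto (cesaroMean fun _ => c) atTop (𝓝 c) := by
  refine tendsto_const_nhds.congr' ?_
  filter_upwards [eventually_ne_atTop 0] with T hT
  have : (T : ℂ) ≠ 0 := ofReal_ne_zero.mpr hT
  simp only [cesaroMean, intervalIntegral.integral_const, sub_zero, real_smul]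
  field_simp

theorem Filter.Tendsto.cesaroMean_of_norm_integral_sub_le {g h : ℝ → ℂ} {L : ℂ} (K : ℝ)
    (hg : Tendsto (cesaroMean g) atTop (𝓝 L))
    (hgh : ∀ᶠ T in atTop, ‖(∫ t in (0 : ℝ)..T, h t) - ∫ t in (0 : ℝ)..T, g t‖ ≤ K) :
    Tendsto (cesaroMean h) atTop (𝓝 L) := by
  have hdiff : Tendsto (fun T : ℝ => (1 / (T : ℂ)) *
      ((∫ t in (0 : ℝ)..T, h t) - ∫ t in (0 : ℝ)..T, g t)) atTop (𝓝 0) := by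
    refine squeeze_zero_norm' ?_ ((tendsto_const_nhds (x := K)).div_atTop tendsto_id)
    filter_upwards [hgh, eventually_gt_atTop 0] with T hT hTpos
    rw [norm_mul, norm_div, norm_one, norm_real, Real.norm_eq_abs, abs_of_pos hTpos,
      div_mul_eq_mul_div, one_mul, id]
    gcongr
  refine (add_zero L ▸ hg.add hdiff).congr fun T => ?_
  simp only [cesaroMean]
  ring

theorem tendsto_cesaroMean_exp_mul_I (c : ℝ) :
    Tendsto (cesaroMean fun t => cexp (c * I * t)) atTop (𝓝 (if c = 0 then 1 else 0)) := by
  rcases eq_or_ne c 0 with rfl | hc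
  · simpa using tendsto_cesaroMean_const 1
  rw [if_neg hc]
  have hcI : (c : ℂ) * I ≠ 0 := mul_ne_zero (ofReal_ne_zero.mpr hc) I_ne_zero
  refine (tendsto_cesaroMean_const 0).cesaroMean_of_norm_integral_sub_le (2 / |c|)
    (Eventually.of_forall fun T => ?_)
  have hunit : ‖cexp (c * I * T)‖ = 1 := by
    rw [norm_exp]; simp
  calc ‖(∫ t in (0 : ℝ)..T, cexp (c * I * t)) - ∫ _ in (0 : ℝ)..T, (0 : ℂ)‖
      = ‖cexp (c * I * T) - 1‖ / |c| := by
        simp [integral_exp_mul_complex hcI]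
    _ ≤ (‖cexp (c * I * T)‖ + ‖(1 : ℂ)‖) / |c| := by gcongr; exact norm_sub_le _ _
    _ = 2 / |c| := by rw [hunit]; norm_num

theorem tendsto_cesaroMean_of_hasSum {F : ℕ → ℝ → ℂ} {G : ℝ → ℂ} {L : ℕ → ℂ} {b : ℕ → ℝ}
    (hF : ∀ m, AEStronglyMeasurable (F m)) (hFb : ∀ m t, ‖F m t‖ ≤ b m) (hb : Summable b)
    (hG : ∀ t, HasSum (fun m => F m t) (G t))
    (hL : ∀ m, Tendsto (cesaroMean (F m)) atTop (𝓝 (L m))) :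
    Tendsto (cesaroMean G) atTop (𝓝 (∑' m, L m)) := by
  have hsum : ∀ T, HasSum (fun m => cesaroMean (F m) T) (cesaroMean G T) := fun T =>
    (intervalIntegral.hasSum_integral_of_dominated_convergence (fun m _ => b m)
      (fun m => (hF m).restrict) (fun m => .of_forall fun t _ => hFb m t)
      (.of_forall fun _ _ => hb) intervalIntegrable_const
      (.of_forall fun t _ => hG t)).mul_left _
  simp_rw [← funext fun T => (hsum T).tsum_eq]
  exact tendsto_tsum_of_dominated_convergence hb hL
    (.of_forall fun T m => norm_cesaroMean_le (hFb m) T)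

theorem natCast_cpow_neg_mul_natCast_cpow {k n : ℕ} (hk : k ≠ 0) (hn : n ≠ 0) (s : ℂ) :
    (k : ℂ) ^ (-s) * (n : ℂ) ^ s = cexp (s * (Real.log n - Real.log k : ℝ)) := by
  rw [cpow_def_of_ne_zero (Nat.cast_ne_zero.mpr hk),
    cpow_def_of_ne_zero (Nat.cast_ne_zero.mpr hn), ← Complex.exp_add, ofReal_sub, natCast_log,
    natCast_log]
  ring_nf

theorem tendsto_cesaroMean_natCast_cpow_neg_mul_natCast_cpow {k n : ℕ} (hk : k ≠ 0) (hn : n ≠ 0)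
    (σ : ℝ) :
    Tendsto (cesaroMean fun t : ℝ => (k : ℂ) ^ (-(σ + t * I)) * (n : ℂ) ^ (σ + t * I)) atTop
      (𝓝 (if k = n then 1 else 0)) := by
  obtain ⟨c, hc_def⟩ : ∃ c, c = Real.log n - Real.log k := ⟨_, rfl⟩
  have hsplit : ∀ t : ℝ, (k : ℂ) ^ (-(σ + t * I)) * (n : ℂ) ^ (σ + t * I) =
      cexp (σ * c) * cexp (c * I * t) := fun t => by
    rw [natCast_cpow_neg_mul_natCast_cpow hk hn, ← hc_def, ← Complex.exp_add]
    ring_nf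
  have hc : c = 0 ↔ k = n := by
    rw [hc_def, sub_eq_zero, Real.log_injOn_pos.eq_iff (by simpa using Nat.pos_of_ne_zero hn)
      (by simpa using Nat.pos_of_ne_zero hk), Nat.cast_inj, eq_comm]
  simp_rw [hsplit, cesaroMean_const_mul]
  convert (tendsto_cesaroMean_exp_mul_I c).const_mul (cexp (σ * c)) using 2
  by_cases hkn : k = n
  · simp [hkn, hc.mpr hkn]
  · simp [hkn, mt hc.mp hkn]

theorem tendsto_cesaroMean_mul_natCast_cpow_of_hasSum {f : ℂ → ℂ} {a : ℕ → ℂ} {σ : ℝ}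
    (hf : ∀ t : ℝ, HasSum (fun m : ℕ => a (m + 1) * ((m + 1 : ℕ) : ℂ) ^ (-(σ + t * I)))
      (f (σ + t * I)))
    {n : ℕ} (hn : n ≠ 0) :
    Tendsto (cesaroMean fun t : ℝ => f (σ + t * I) * (n : ℂ) ^ (σ + t * I)) atTop (𝓝 (a n)) := by
  let F (m : ℕ) (t : ℝ) : ℂ :=
    a (m + 1) * (((m + 1 : ℕ) : ℂ) ^ (-(σ + t * I)) * (n : ℂ) ^ (σ + t * I))
  have hFnorm : ∀ m t, ‖F m t‖ = ‖F m 0‖ := fun m t => by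
    simp only [F, norm_mul, norm_natCast_cpow_of_pos (Nat.succ_pos m),
      norm_natCast_cpow_of_pos (Nat.pos_of_ne_zero hn)]
    simp
  have hF : ∀ m, Continuous (F m) := fun m => by
    have hline : Continuous fun t : ℝ => (σ : ℂ) + t * I := by fun_prop
    exact continuous_const.mul
      ((hline.neg.const_cpow (.inl (Nat.cast_ne_zero.mpr m.succ_ne_zero))).mul
        (hline.const_cpow (.inl (Nat.cast_ne_zero.mpr hn))))
  have hsum : Summable fun m => ‖F m 0‖ := by
    refine ((hf 0).mul_right ((n : ℂ) ^ (σ + (0 : ℝ) * I))).summable.norm.congr fun m => ?_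
    simp only [F, mul_assoc]
  have hlim := tendsto_cesaroMean_of_hasSum (fun m => (hF m).aestronglyMeasurable)
    (fun m t => (hFnorm m t).le) hsum
    (fun t => by simpa only [F, mul_assoc] using (hf t).mul_right ((n : ℂ) ^ (σ + t * I)))
    (fun m => by
      simpa only [F, cesaroMean_const_mul] using
        (tendsto_cesaroMean_natCast_cpow_neg_mul_natCast_cpow m.succ_ne_zero hn σ).const_mul
          (a (m + 1)))
  convert hlim using 2
  rw [tsum_eq_single (n - 1) fun m hm => by simp [Nat.succ_eq_add_one]; omega]
  simp [Nat.sub_add_cancel (Nat.pos_of_ne_zero hn)]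

/-- Cauchy's theorem on the rectangle `[ε, σ] × [0, T]` trades the two vertical sides for the
two horizontal ones. -/
theorem norm_integral_vertical_sub_le {g : ℂ → ℂ} {ε σ T M : ℝ} (hεσ : ε ≤ σ)
    (hg : DifferentiableOn ℂ g ([[ε, σ]] ×ℂ [[0, T]]))
    (hM : ∀ s ∈ [[ε, σ]] ×ℂ [[0, T]], ‖g s‖ ≤ M) :
    ‖(∫ t in (0 : ℝ)..T, g (ε + t * I)) - ∫ t in (0 : ℝ)..T, g (σ + t * I)‖ ≤
      2 * M * (σ - ε) := by
  have hcauchy := integral_boundary_rect_eq_zero_of_differentiableOn g ε (σ + T * I)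
    (by simpa using hg)
  simp only [add_re, add_im, ofReal_re, ofReal_im, mul_re, mul_im, I_re, I_im, mul_zero,
    mul_one, zero_mul, sub_zero, add_zero, zero_add, ofReal_zero, smul_eq_mul] at hcauchy
  have hswap : I * ((∫ t in (0 : ℝ)..T, g (ε + t * I)) - ∫ t in (0 : ℝ)..T, g (σ + t * I)) =
      (∫ x in ε..σ, g x) - ∫ x in ε..σ, g (x + T * I) := by
    linear_combination -hcauchy
  have hside : ∀ y ∈ [[0, T]], ‖∫ x in ε..σ, g (x + y * I)‖ ≤ M * (σ - ε) := fun y hy => by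
    rw [← abs_of_nonneg (sub_nonneg.mpr hεσ)]
    refine intervalIntegral.norm_integral_le_of_norm_le_const fun x hx => hM _ ?_
    rw [mem_reProdIm]
    simpa using ⟨Set.uIoc_subset_uIcc hx, hy⟩
  calc _ = ‖(∫ x in ε..σ, g x) - ∫ x in ε..σ, g (x + T * I)‖ := by
        rw [← hswap, norm_mul, norm_I, one_mul]
    _ ≤ M * (σ - ε) + M * (σ - ε) := by
        refine (norm_sub_le _ _).trans (add_le_add ?_ (hside T Set.right_mem_uIcc))
        simpa using hside 0 Set.left_mem_uIcc
    _ = 2 * M * (σ - ε) := by ring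

theorem tendsto_integral_vertical_nhdsGT_zero {g : ℂ → ℂ} {gb : ℝ → ℂ} {σ M : ℝ} (hσ : 0 < σ)
    (hg : ContinuousOn g {s | 0 < s.re}) (hM : ∀ s : ℂ, 0 < s.re → s.re ≤ σ → ‖g s‖ ≤ M)
    (hgb : ∀ᵐ t : ℝ, Tendsto (fun ε : ℝ => g (ε + t * I)) (𝓝[>] 0) (𝓝 (gb t))) (T : ℝ) :
    Tendsto (fun ε : ℝ => ∫ t in (0 : ℝ)..T, g (ε + t * I)) (𝓝[>] 0)
      (𝓝 (∫ t in (0 : ℝ)..T, gb t)) := by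
  have hstrip : ∀ᶠ ε in 𝓝[>] (0 : ℝ), ε ∈ Set.Ioc 0 σ := Ioc_mem_nhdsGT hσ
  refine intervalIntegral.tendsto_integral_filter_of_dominated_convergence (fun _ => M)
    ?_ ?_ intervalIntegrable_const (hgb.mono fun t ht _ => ht)
  · filter_upwards [hstrip] with ε hε
    exact (hg.comp_continuous (by fun_prop) fun t => by simpa using hε.1).aestronglyMeasurable
  · filter_upwards [hstrip] with ε hε
    exact .of_forall fun t _ => hM _ (by simpa using hε.1) (by simpa using hε.2)

theorem norm_integral_boundary_sub_integral_vertical_le {g : ℂ → ℂ} {gb : ℝ → ℂ} {σ M : ℝ}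
    (hσ : 0 < σ) (hg : DifferentiableOn ℂ g {s | 0 < s.re})
    (hM : ∀ s : ℂ, 0 < s.re → s.re ≤ σ → ‖g s‖ ≤ M)
    (hgb : ∀ᵐ t : ℝ, Tendsto (fun ε : ℝ => g (ε + t * I)) (𝓝[>] 0) (𝓝 (gb t))) (T : ℝ) :
    ‖(∫ t in (0 : ℝ)..T, gb t) - ∫ t in (0 : ℝ)..T, g (σ + t * I)‖ ≤ 2 * M * σ := by
  have hM0 : 0 ≤ M := (norm_nonneg _).trans (hM σ (by simpa using hσ) (by simp))
  refine le_of_tendsto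
    ((tendsto_integral_vertical_nhdsGT_zero hσ hg.continuousOn hM hgb T).sub_const _).norm ?_
  filter_upwards [Ioo_mem_nhdsGT hσ] with ε hε
  have hrect : [[ε, σ]] ×ℂ [[0, T]] ⊆ {s | 0 < s.re} := fun s hs => by
    rw [mem_reProdIm, Set.uIcc_of_le hε.2.le] at hs
    exact hε.1.trans_le hs.1.1
  calc _ ≤ 2 * M * (σ - ε) := norm_integral_vertical_sub_le hε.2.le (hg.mono hrect)
        fun s hs => by
          have hs' := hrect hs
          rw [mem_reProdIm, Set.uIcc_of_le hε.2.le] at hs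
          exact hM s hs' hs.1.2
    _ ≤ 2 * M * σ := by nlinarith [hε.1]

/-- For a bounded analytic function on `Re s > 0` represented by a Dirichlet series
`∑ aₙ n^{-s}` in some half-plane, with a.e. boundary values `fb` on the imaginary axis,
each coefficient is recovered as `aₙ = lim_{T→∞} (1/T) ∫_0^T f(it) n^{it} dt`. -/
theorem coefficients_from_boundary_values (f : ℂ → ℂ) (a : ℕ → ℂ) (σ₀ : ℝ) (fb : ℝ → ℂ)
    (hf : DifferentiableOn ℂ f {s : ℂ | 0 < s.re})
    (hbdd : ∃ C : ℝ, ∀ s : ℂ, 0 < s.re → ‖f s‖ ≤ C)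
    (hrep : ∀ s : ℂ, σ₀ < s.re →
      HasSum (fun n : ℕ => a (n + 1) * ((n + 1 : ℕ) : ℂ) ^ (-s)) (f s))
    (hfb : ∀ᵐ t : ℝ ∂volume,
      Tendsto (fun σ : ℝ => f (σ + t * I)) (nhdsWithin 0 (Set.Ioi 0)) (nhds (fb t))) :
    ∀ n : ℕ, 1 ≤ n →
      Tendsto (fun T : ℝ => (1 / (T : ℂ)) * ∫ t in (0:ℝ)..T, fb t * (n : ℂ) ^ ((t : ℂ) * I))
        atTop (nhds (a n)) := by
  intro n hn
  obtain ⟨C, hC⟩ := hbdd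
  set σ := max σ₀ 0 + 1
  have hσ : 0 < σ := by positivity
  have hσ₀ : σ₀ < σ := by linarith [le_max_left σ₀ 0]
  have hline := tendsto_cesaroMean_mul_natCast_cpow_of_hasSum
    (fun t => hrep (σ + t * I) (by simpa using hσ₀)) (Nat.one_le_iff_ne_zero.mp hn)
  have hpow : Differentiable ℂ fun s : ℂ => (n : ℂ) ^ s :=
    fun s => differentiableAt_id.const_cpow (.inl (Nat.cast_ne_zero.mpr (by omega)))
  refine hline.cesaroMean_of_norm_integral_sub_le (2 * (C * ‖(n : ℂ) ^ (σ : ℂ)‖) * σ)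
    (.of_forall fun T => norm_integral_boundary_sub_integral_vertical_le
      (g := fun s => f s * (n : ℂ) ^ s) hσ (hf.mul hpow.differentiableOn)
      (fun s hs hsσ => ?_) ?_ T)
  · rw [norm_mul]
    exact mul_le_mul (hC s hs)
      (norm_natCast_cpow_le_norm_natCast_cpow_of_pos hn (by simpa using hsσ))
      (norm_nonneg _) ((norm_nonneg _).trans (hC s hs))
  · filter_upwards [hfb] with t ht
    have hpow_t : Continuous fun ε : ℝ => (n : ℂ) ^ ((ε : ℂ) + t * I) :=
      hpow.continuous.comp (by fun_prop)
    simpa using ht.mul ((hpow_t.tendsto 0).mono_left nhdsWithin_le_nhds)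
end

section
/- There exists an absolute constant C such that for every Dirichlet series f(s) = ∑_{n=1}^∞ a_n n^{-s} with ∑ |a_n|² < ∞ and for every real θ, ∫_θ^{θ+1} |f(1/2 + it)|² dt ≤ C ∑_{n=1}^∞ |a_n|². -/
/-!
Put `c = θ + 1/2`. On `[θ, θ + 1]` the Gaussian `e^{-(t-c)²}` is at least `e^{-1/4}`, so the local
mean square is at most `e^{1/4} ∫_ℝ |f(1/2+it)|² e^{-(t-c)²} dt`. Expanding the square, this is
the quadratic form `∑ aₘ conj(aₙ) (mn)^{-1/2} ŵ(log m - log n)` of the Gaussian's Fourier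
transform `|ŵ(ξ)| = √π e^{-ξ²/4}`. Since `e^{-d²/4} ≤ e^{4 - 2|d|}`, its kernel is at most
`e⁴ min(m,n)/max(m,n)²`, whose row sums are bounded by `3`, and Schur's test finishes.
-/

open MeasureTheory Complex Real ComplexConjugate Finset

lemma cexp_mul_gaussian_eq_cexp_quadratic (μ c t : ℝ) :
    cexp (-(t * μ) * I) * rexp (-(t - c) ^ 2) =
      cexp (-1 * t ^ 2 + (2 * c - μ * I) * t + -c ^ 2) := by
  rw [ofReal_exp, ← Complex.exp_add]
  push_cast
  ring_nf

lemma integrable_cexp_mul_gaussian (μ c : ℝ) :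
    Integrable fun t : ℝ => cexp (-(t * μ) * I) * rexp (-(t - c) ^ 2) := by
  simp_rw [cexp_mul_gaussian_eq_cexp_quadratic]
  exact integrable_cexp_quadratic' (by simp) _ _

lemma integral_cexp_mul_gaussian (μ c : ℝ) :
    ∫ t : ℝ, cexp (-(t * μ) * I) * rexp (-(t - c) ^ 2) =
      (π : ℂ) ^ (1 / 2 : ℂ) * cexp (-(c * μ) * I - μ ^ 2 / 4) := by
  simp_rw [cexp_mul_gaussian_eq_cexp_quadratic]
  rw [integral_cexp_quadratic (by simp)]
  congr 2
  · simp
  · ring_nf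
    rw [I_sq]
    ring

lemma norm_integral_cexp_mul_gaussian (μ c : ℝ) :
    ‖∫ t : ℝ, cexp (-(t * μ) * I) * rexp (-(t - c) ^ 2)‖ = √π * rexp (-μ ^ 2 / 4) := by
  rw [integral_cexp_mul_gaussian, norm_mul, norm_exp, Complex.norm_cpow_eq_rpow_re_of_pos pi_pos,
    Real.sqrt_eq_rpow]
  congr 2
  · simp
  · simp [← ofReal_pow]
    ring

variable {ι : Type*}

lemma norm_sum_mul_cexp_sq (s : Finset ι) (b : ι → ℂ) (μ : ι → ℝ) (t : ℝ) :
    (‖∑ i ∈ s, b i * cexp (-(t * μ i) * I)‖ ^ 2 : ℂ) =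
      ∑ i ∈ s, ∑ j ∈ s, b i * conj (b j) * cexp (-(t * ((μ i - μ j : ℝ) : ℂ)) * I) := by
  rw [← mul_conj', map_sum, sum_mul_sum]
  refine sum_congr rfl fun i _ => sum_congr rfl fun j _ => ?_
  rw [map_mul, ← exp_conj, mul_mul_mul_comm, ← Complex.exp_add]
  congr 2
  simp only [map_mul, map_neg, conj_ofReal, conj_I]
  push_cast
  ring

lemma norm_sum_mul_cexp_sq_mul_gaussian_eq_re (s : Finset ι) (b : ι → ℂ) (μ : ι → ℝ) (c : ℝ) :
    (fun t : ℝ => ‖∑ i ∈ s, b i * cexp (-(t * μ i) * I)‖ ^ 2 * rexp (-(t - c) ^ 2)) =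
      fun t : ℝ => (∑ i ∈ s, ∑ j ∈ s, b i * conj (b j) *
        (cexp (-(t * ((μ i - μ j : ℝ) : ℂ)) * I) * rexp (-(t - c) ^ 2))).re := by
  ext t
  simp_rw [← mul_assoc, ← sum_mul, ← norm_sum_mul_cexp_sq, ← ofReal_pow, ← ofReal_mul,
    ofReal_re]

lemma integrable_norm_sum_mul_cexp_sq_mul_gaussian (s : Finset ι) (b : ι → ℂ) (μ : ι → ℝ)
    (c : ℝ) :
    Integrable fun t : ℝ => ‖∑ i ∈ s, b i * cexp (-(t * μ i) * I)‖ ^ 2 * rexp (-(t - c) ^ 2) := by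
  rw [norm_sum_mul_cexp_sq_mul_gaussian_eq_re]
  exact (integrable_finsetSum s fun _ _ => integrable_finsetSum s fun _ _ =>
    (integrable_cexp_mul_gaussian _ c).const_mul _).re

lemma integral_norm_sum_mul_cexp_sq_mul_gaussian_le (s : Finset ι) (b : ι → ℂ) (μ : ι → ℝ)
    (c : ℝ) :
    ∫ t : ℝ, ‖∑ i ∈ s, b i * cexp (-(t * μ i) * I)‖ ^ 2 * rexp (-(t - c) ^ 2) ≤
      √π * ∑ i ∈ s, ∑ j ∈ s, ‖b i‖ * ‖b j‖ * rexp (-(μ i - μ j) ^ 2 / 4) := by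
  have hint (i j : ι) : Integrable fun t : ℝ => b i * conj (b j) *
      (cexp (-(t * ((μ i - μ j : ℝ) : ℂ)) * I) * rexp (-(t - c) ^ 2)) :=
    (integrable_cexp_mul_gaussian _ c).const_mul _
  have hre := reCLM.integral_comp_comm
    (integrable_finsetSum s fun i _ => integrable_finsetSum s fun j _ => hint i j)
  simp only [reCLM_apply] at hre
  rw [norm_sum_mul_cexp_sq_mul_gaussian_eq_re, hre, integral_finsetSum s fun i _ =>
    integrable_finsetSum s fun j _ => hint i j]
  refine (Complex.re_le_norm _).trans ((norm_sum_le _ _).trans ?_)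
  rw [mul_sum]
  refine sum_le_sum fun i _ => ?_
  rw [integral_finsetSum s fun j _ => hint i j]
  refine (norm_sum_le _ _).trans ?_
  rw [mul_sum]
  refine sum_le_sum fun j _ => le_of_eq ?_
  rw [integral_const_mul, norm_mul, norm_mul, norm_conj, norm_integral_cexp_mul_gaussian]
  ring

lemma intervalIntegral_norm_sum_mul_cexp_sq_le (s : Finset ι) (b : ι → ℂ) (μ : ι → ℝ) (θ : ℝ) :
    ∫ t in θ..θ + 1, ‖∑ i ∈ s, b i * cexp (-(t * μ i) * I)‖ ^ 2 ≤
      rexp (1 / 4) * √π * ∑ i ∈ s, ∑ j ∈ s, ‖b i‖ * ‖b j‖ * rexp (-(μ i - μ j) ^ 2 / 4) := by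
  set F : ℝ → ℝ := fun t => ‖∑ i ∈ s, b i * cexp (-(t * μ i) * I)‖ ^ 2
  set c := θ + 1 / 2 with hc
  have hF : Continuous F := by fun_prop
  have hFw := integrable_norm_sum_mul_cexp_sq_mul_gaussian s b μ c
  have hlocal : ∀ t ∈ Set.Icc θ (θ + 1), F t ≤ rexp (1 / 4) * (F t * rexp (-(t - c) ^ 2)) := by
    rintro t ⟨ht₁, ht₂⟩
    have hweight : 1 ≤ rexp (1 / 4) * rexp (-(t - c) ^ 2) := by
      rw [← Real.exp_add]
      exact Real.one_le_exp (by nlinarith [hc])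
    nlinarith [sq_nonneg ‖∑ i ∈ s, b i * cexp (-(t * μ i) * I)‖]
  calc ∫ t in θ..θ + 1, F t
      ≤ ∫ t in θ..θ + 1, rexp (1 / 4) * (F t * rexp (-(t - c) ^ 2)) :=
        intervalIntegral.integral_mono_on (by linarith) (hF.intervalIntegrable _ _)
          ((hFw.const_mul _).intervalIntegrable) hlocal
    _ ≤ rexp (1 / 4) * ∫ t, F t * rexp (-(t - c) ^ 2) := by
        rw [intervalIntegral.integral_const_mul, intervalIntegral.integral_of_le (by linarith)]
        exact mul_le_mul_of_nonneg_left
          (setIntegral_le_integral hFw (.of_forall fun t => by positivity)) (by positivity)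
    _ ≤ rexp (1 / 4) * (√π * ∑ i ∈ s, ∑ j ∈ s, ‖b i‖ * ‖b j‖ * rexp (-(μ i - μ j) ^ 2 / 4)) := by
        gcongr
        exact integral_norm_sum_mul_cexp_sq_mul_gaussian_le s b μ c
    _ = _ := by ring

lemma sum_sum_mul_mul_le_of_row_sum_le {s : Finset ι} {K : ι → ι → ℝ} {R : ℝ}
    (hK : ∀ i j, 0 ≤ K i j) (hsymm : ∀ i j, K i j = K j i)
    (hrow : ∀ i ∈ s, ∑ j ∈ s, K i j ≤ R) (x : ι → ℝ) :
    ∑ i ∈ s, ∑ j ∈ s, x i * x j * K i j ≤ R * ∑ i ∈ s, x i ^ 2 := by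
  calc ∑ i ∈ s, ∑ j ∈ s, x i * x j * K i j
      ≤ ∑ i ∈ s, ∑ j ∈ s, (x i ^ 2 * K i j + x j ^ 2 * K j i) / 2 := by
        gcongr with i _ j _
        rw [← hsymm i j]
        nlinarith [mul_nonneg (sq_nonneg (x i - x j)) (hK i j)]
    _ = ∑ i ∈ s, ∑ j ∈ s, x i ^ 2 * K i j := by
        simp only [← sum_div, sum_add_distrib]
        rw [sum_comm (f := fun i j => x j ^ 2 * K j i)]
        ring
    _ ≤ R * ∑ i ∈ s, x i ^ 2 := by
        rw [mul_sum]
        refine sum_le_sum fun i hi => ?_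
        rw [← mul_sum, mul_comm]
        exact mul_le_mul_of_nonneg_right (hrow i hi) (sq_nonneg _)

lemma sum_Icc_min_div_max_sq_le (N : ℕ) {m : ℕ} (hm : 0 < m) :
    ∑ n ∈ Icc 1 N, min (m : ℝ) n / max (m : ℝ) n ^ 2 ≤ 3 := by
  have hm' : (0 : ℝ) < m := by exact_mod_cast hm
  rw [← sum_filter_add_sum_filter_not _ (· ≤ m)]
  have hsmall : ∑ n ∈ (Icc 1 N).filter (· ≤ m), min (m : ℝ) n / max (m : ℝ) n ^ 2 ≤ 1 :=
    calc ∑ n ∈ (Icc 1 N).filter (· ≤ m), min (m : ℝ) n / max (m : ℝ) n ^ 2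
        ≤ ∑ n ∈ (Icc 1 N).filter (· ≤ m), (m : ℝ)⁻¹ := by
          refine sum_le_sum fun n hn => ?_
          have hnm : (n : ℝ) ≤ m := by exact_mod_cast (mem_filter.1 hn).2
          rw [min_eq_right hnm, max_eq_left hnm, div_le_iff₀ (by positivity)]
          field_simp
          exact hnm
      _ ≤ m * (m : ℝ)⁻¹ := by
          rw [sum_const, nsmul_eq_mul]
          gcongr
          have : (Icc 1 N).filter (· ≤ m) ⊆ Icc 1 m := fun n hn => by
            simp only [mem_filter, mem_Icc] at hn ⊢; omega
          simpa using card_le_card this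
      _ = 1 := mul_inv_cancel₀ hm'.ne'
  have hlarge : ∑ n ∈ (Icc 1 N).filter (¬ · ≤ m), min (m : ℝ) n / max (m : ℝ) n ^ 2 ≤ 2 :=
    calc ∑ n ∈ (Icc 1 N).filter (¬ · ≤ m), min (m : ℝ) n / max (m : ℝ) n ^ 2
        = m * ∑ n ∈ (Icc 1 N).filter (¬ · ≤ m), ((n : ℝ) ^ 2)⁻¹ := by
          rw [mul_sum]
          refine sum_congr rfl fun n hn => ?_
          have hmn : (m : ℝ) ≤ n := by exact_mod_cast (not_le.1 (mem_filter.1 hn).2).le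
          rw [min_eq_left hmn, max_eq_right hmn, div_eq_mul_inv]
      _ ≤ m * ∑ n ∈ Ioo m (N + 1), ((n : ℝ) ^ 2)⁻¹ := by
          refine mul_le_mul_of_nonneg_left (sum_le_sum_of_subset_of_nonneg (fun n hn => ?_)
            fun n _ _ => by positivity) hm'.le
          simp only [mem_filter, mem_Icc, mem_Ioo] at hn ⊢
          omega
      _ ≤ m * (2 / (m + 1)) := by gcongr; exact sum_Ioo_inv_sq_le m (N + 1)
      _ ≤ 2 := by
          rw [mul_div_assoc', div_le_iff₀ (by positivity)]
          linarith
  linarith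

lemma rpow_neg_half_mul_rpow_neg_half_mul_exp_le {x y : ℝ} (hx : 0 < x) (hy : 0 < y) :
    x ^ (-(1 / 2) : ℝ) * y ^ (-(1 / 2) : ℝ) * rexp (-(Real.log x - Real.log y) ^ 2 / 4) ≤
      rexp 4 * (min x y / max x y ^ 2) := by
  wlog hxy : x ≤ y generalizing x y
  · have := this hy hx (le_of_not_ge hxy)
    rwa [mul_comm (y ^ _), ← neg_sub, neg_sq, min_comm, max_comm] at this
  obtain ⟨u, rfl⟩ : ∃ u, x = rexp u := ⟨Real.log x, (exp_log hx).symm⟩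
  obtain ⟨v, rfl⟩ : ∃ v, y = rexp v := ⟨Real.log y, (exp_log hy).symm⟩
  rw [min_eq_left hxy, max_eq_right hxy, Real.log_exp, Real.log_exp, ← Real.exp_mul,
    ← Real.exp_mul, ← Real.exp_add, ← Real.exp_add, ← Real.exp_nat_mul, ← Real.exp_sub,
    ← Real.exp_add, Real.exp_le_exp]
  push_cast
  nlinarith [sq_nonneg (v - u - 3)]

lemma natCast_cpow_neg_add_mul_I {n : ℕ} (hn : n ≠ 0) (s : ℂ) (t : ℝ) :
    (n : ℂ) ^ (-(s + t * I)) = (n : ℂ) ^ (-s) * cexp (-(t * Real.log n) * I) := by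
  rw [neg_add, cpow_add _ _ (Nat.cast_ne_zero.2 hn)]
  congr 1
  rw [cpow_def_of_ne_zero (Nat.cast_ne_zero.2 hn), natCast_log]
  ring_nf

lemma sum_Icc_rpow_neg_half_mul_exp_le (N : ℕ) {m : ℕ} (hm : 0 < m) :
    ∑ n ∈ Icc 1 N, (m : ℝ) ^ (-(1 / 2) : ℝ) * (n : ℝ) ^ (-(1 / 2) : ℝ) *
      rexp (-(Real.log m - Real.log n) ^ 2 / 4) ≤ rexp 4 * 3 :=
  calc _ ≤ ∑ n ∈ Icc 1 N, rexp 4 * (min (m : ℝ) n / max (m : ℝ) n ^ 2) :=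
        sum_le_sum fun n hn => rpow_neg_half_mul_rpow_neg_half_mul_exp_le (Nat.cast_pos.2 hm)
          (Nat.cast_pos.2 (by grind))
    _ ≤ rexp 4 * 3 := by
        rw [← mul_sum]
        gcongr
        exact sum_Icc_min_div_max_sq_le N hm

/-- Local embedding for `𝓗²` (stated for finite Dirichlet polynomials): there is an
absolute constant `C` such that for every Dirichlet polynomial `f = ∑_{n=1}^N aₙ n^{-s}`
and every `θ ∈ ℝ`, `∫_θ^{θ+1} |f(1/2+it)|² dt ≤ C ∑ |aₙ|²`. -/
theorem H2_local_embedding :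
    ∃ C : ℝ, ∀ (N : ℕ) (a : ℕ → ℂ) (θ : ℝ),
      (∫ t in θ..(θ + 1),
          ‖∑ n ∈ Finset.Icc 1 N, a n * (n : ℂ) ^ (-((1 / 2 : ℂ) + t * I))‖ ^ 2) ≤
        C * ∑ n ∈ Finset.Icc 1 N, ‖a n‖ ^ 2 := by
  refine ⟨rexp (1 / 4) * √π * (rexp 4 * 3), fun N a θ => ?_⟩
  set b : ℕ → ℂ := fun n => a n * (n : ℂ) ^ (-(1 / 2 : ℂ))
  have hsum (t : ℝ) : ∑ n ∈ Icc 1 N, a n * (n : ℂ) ^ (-((1 / 2 : ℂ) + t * I)) =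
      ∑ n ∈ Icc 1 N, b n * cexp (-(t * Real.log n) * I) :=
    sum_congr rfl fun n hn => by rw [natCast_cpow_neg_add_mul_I (by grind), mul_assoc]
  have hb : ∀ n ∈ Icc 1 N, ‖b n‖ = ‖a n‖ * (n : ℝ) ^ (-(1 / 2) : ℝ) := fun n hn => by
    simp [b, norm_natCast_cpow_of_pos (by grind : 0 < n)]
  simp_rw [hsum]
  calc _ ≤ rexp (1 / 4) * √π * ∑ m ∈ Icc 1 N, ∑ n ∈ Icc 1 N,
          ‖b m‖ * ‖b n‖ * rexp (-(Real.log m - Real.log n) ^ 2 / 4) :=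
        intervalIntegral_norm_sum_mul_cexp_sq_le _ _ _ θ
    _ = rexp (1 / 4) * √π * ∑ m ∈ Icc 1 N, ∑ n ∈ Icc 1 N, ‖a m‖ * ‖a n‖ *
          ((m : ℝ) ^ (-(1 / 2) : ℝ) * (n : ℝ) ^ (-(1 / 2) : ℝ) *
            rexp (-(Real.log m - Real.log n) ^ 2 / 4)) := by
        congr 1
        refine sum_congr rfl fun m hm => sum_congr rfl fun n hn => ?_
        rw [hb m hm, hb n hn]
        ring
    _ ≤ rexp (1 / 4) * √π * (rexp 4 * 3 * ∑ n ∈ Icc 1 N, ‖a n‖ ^ 2) := by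
        gcongr
        refine sum_sum_mul_mul_le_of_row_sum_le (fun _ _ => by positivity) (fun m n => ?_)
          (fun m hm => sum_Icc_rpow_neg_half_mul_exp_le N (by grind)) _
        rw [mul_comm ((m : ℝ) ^ _), ← neg_sub, neg_sq]
    _ = _ := by ring
end

section
/- Let p = 2k for a positive integer k. Then there is a constant C_p such that for every finite Dirichlet polynomial f, ∫_0^1 |f(1/2 + it)|^p dt ≤ C_p ‖f‖^p_{𝓗^p}, where ‖f‖_{𝓗^p}^p = lim_{T→∞} (1/(2T)) ∫_{-T}^T |f(it)|^p dt. -/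
/-!
Since `|f|^{2k} = |f^k|^2` and `f^k` is again a Dirichlet polynomial `∑ b_n n^{-s}`, only `p = 2`
matters. There the mean value on the imaginary axis is `∑ |b_n|^2`: the frequencies `log n` are
distinct, so averaging kills every off-diagonal term. For the embedding, dominate the indicator of
`[0, 1]` by `e · e^{-t²}`; the Fourier transform of the Gaussian bounds
`∫ e^{-t²} |∑ b_n n^{-1/2-it}|² dt` by the quadratic form in `|b_n|` of the kernel
`√π e^{-(log q - log r)²/4} / √(qr) ≤ √π e^{9/4} min(q, r) / max(q, r)²`,
whose row sums are bounded, so Schur's test concludes.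
-/

open MeasureTheory Filter Complex Real

open scoped ComplexConjugate Pointwise Topology

theorem zero_notMem_pow {M : Type*} [MonoidWithZero M] [NoZeroDivisors M] [Nontrivial M]
    [DecidableEq M] {s : Finset M} (hs : 0 ∉ s) (k : ℕ) : 0 ∉ s ^ k := by
  induction k with
  | zero => simp
  | succ k ih =>
    rw [pow_succ, Finset.mem_mul]
    rintro ⟨m, hm, n, hn, hmn⟩
    rcases mul_eq_zero.1 hmn with rfl | rfl
    exacts [ih hm, hs hn]

noncomputable def dirichletPoly (s : Finset ℕ) (a : ℕ → ℂ) (z : ℂ) : ℂ :=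
  ∑ n ∈ s, a n * (n : ℂ) ^ (-z)

theorem exists_dirichletPoly_mul_eq (s t : Finset ℕ) (a b : ℕ → ℂ) :
    ∃ c : ℕ → ℂ, ∀ z, dirichletPoly s a z * dirichletPoly t b z = dirichletPoly (s * t) c z := by
  refine ⟨fun n => ∑ p ∈ (s ×ˢ t).filter (fun p => p.1 * p.2 = n), a p.1 * b p.2, fun z => ?_⟩
  rw [dirichletPoly, dirichletPoly, dirichletPoly, Finset.sum_mul_sum, ← Finset.sum_product',
    ← Finset.sum_fiberwise_of_maps_to (g := fun p : ℕ × ℕ => p.1 * p.2) (t := s * t)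
    fun p hp => Finset.mul_mem_mul (Finset.mem_product.1 hp).1 (Finset.mem_product.1 hp).2]
  refine Finset.sum_congr rfl fun n _ => ?_
  rw [Finset.sum_mul]
  refine Finset.sum_congr rfl fun p hp => ?_
  rw [← (Finset.mem_filter.1 hp).2, Nat.cast_mul, natCast_mul_natCast_cpow]
  ring

theorem exists_dirichletPoly_pow_eq (s : Finset ℕ) (a : ℕ → ℂ) (k : ℕ) :
    ∃ b : ℕ → ℂ, ∀ z, dirichletPoly s a z ^ k = dirichletPoly (s ^ k) b z := by
  induction k with
  | zero => exact ⟨fun _ => 1, fun z => by simp [dirichletPoly, ← Finset.singleton_one]⟩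
  | succ k ih =>
    obtain ⟨b, hb⟩ := ih
    obtain ⟨c, hc⟩ := exists_dirichletPoly_mul_eq (s ^ k) s b a
    exact ⟨c, fun z => by rw [pow_succ, hb, hc, pow_succ]⟩

theorem dirichletPoly_add_mul_I {s : Finset ℕ} (hs : 0 ∉ s) (a : ℕ → ℂ) (σ : ℂ) (t : ℝ) :
    dirichletPoly s a (σ + t * I) =
      ∑ n ∈ s, a n * (n : ℂ) ^ (-σ) * cexp (↑(-Real.log n) * t * I) := by
  refine Finset.sum_congr rfl fun n hn => ?_
  have hn0 : (n : ℂ) ≠ 0 := Nat.cast_ne_zero.2 (ne_of_mem_of_not_mem hn hs)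
  rw [neg_add, cpow_add _ _ hn0, cpow_def_of_ne_zero hn0 (-(t * I)), ← natCast_log, mul_assoc]
  push_cast
  ring_nf

theorem ofReal_norm_sq_sum_mul_exp {ι : Type*} (s : Finset ι) (c : ι → ℂ) (ω : ι → ℝ) (t : ℝ) :
    ((‖∑ q ∈ s, c q * cexp (ω q * t * I)‖ ^ 2 : ℝ) : ℂ) =
      ∑ q ∈ s, ∑ r ∈ s, c q * conj (c r) * cexp (↑(ω q - ω r) * t * I) := by
  rw [Complex.ofReal_pow, ← mul_conj', map_sum, Finset.sum_mul_sum]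
  refine Finset.sum_congr rfl fun q _ => Finset.sum_congr rfl fun r _ => ?_
  rw [map_mul, ← exp_conj, mul_mul_mul_comm, ← Complex.exp_add]
  simp only [map_mul, conj_ofReal, conj_I]
  push_cast
  ring_nf

theorem tendsto_mean_exp_mul_I (θ : ℝ) :
    Tendsto (fun T : ℝ => ((1 / (2 * T) : ℝ) : ℂ) * ∫ t in (-T)..T, cexp (θ * t * I)) atTop
      (𝓝 (if θ = 0 then 1 else 0)) := by
  split_ifs with hθ
  · refine tendsto_const_nhds.congr' ?_
    filter_upwards [eventually_gt_atTop 0] with T hT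
    simp only [hθ, ofReal_zero, zero_mul, Complex.exp_zero, intervalIntegral.integral_const,
      real_smul, mul_one]
    have hT0 : (T : ℂ) ≠ 0 := ofReal_ne_zero.2 hT.ne'
    push_cast
    field_simp
    ring
  · have hθI : (θ * I : ℂ) ≠ 0 := mul_ne_zero (ofReal_ne_zero.2 hθ) I_ne_zero
    have hbound : ∀ T > 0, ‖((1 / (2 * T) : ℝ) : ℂ) * ∫ t in (-T)..T, cexp (θ * t * I)‖
        ≤ |θ|⁻¹ * T⁻¹ := by
      intro T hT
      simp_rw [mul_right_comm _ _ I]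
      rw [integral_exp_mul_complex hθI, norm_mul, norm_div, norm_real,
        Real.norm_of_nonneg (by positivity)]
      have h2 : ‖cexp (θ * I * T) - cexp (θ * I * (-T : ℝ))‖ ≤ 2 := by
        refine (norm_sub_le _ _).trans ?_
        simp_rw [mul_right_comm _ I, ← ofReal_mul, norm_exp_ofReal_mul_I]
        norm_num
      rw [norm_mul, norm_real, norm_I, mul_one, Real.norm_eq_abs]
      calc 1 / (2 * T) * (‖cexp (θ * I * T) - cexp (θ * I * (-T : ℝ))‖ / |θ|)
          ≤ 1 / (2 * T) * (2 / |θ|) := by gcongr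
        _ = |θ|⁻¹ * T⁻¹ := by field_simp
    refine squeeze_zero_norm' ?_ (by simpa using tendsto_inv_atTop_zero.const_mul |θ|⁻¹)
    filter_upwards [eventually_gt_atTop 0] with T hT using hbound T hT

theorem tendsto_mean_norm_sq_sum_mul_exp {ι : Type*} (s : Finset ι) (c : ι → ℂ) {ω : ι → ℝ}
    (hω : Set.InjOn ω s) :
    Tendsto (fun T : ℝ => 1 / (2 * T) * ∫ t in (-T)..T, ‖∑ q ∈ s, c q * cexp (ω q * t * I)‖ ^ 2)
      atTop (𝓝 (∑ q ∈ s, ‖c q‖ ^ 2)) := by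
  have hmean : ∀ T : ℝ,
      ((1 / (2 * T) * ∫ t in (-T)..T, ‖∑ q ∈ s, c q * cexp (ω q * t * I)‖ ^ 2 : ℝ) : ℂ) =
        ∑ q ∈ s, ∑ r ∈ s, c q * conj (c r) *
          (((1 / (2 * T) : ℝ) : ℂ) * ∫ t in (-T)..T, cexp (↑(ω q - ω r) * t * I)) := by
    intro T
    rw [ofReal_mul, ← intervalIntegral.integral_ofReal]
    simp_rw [ofReal_norm_sq_sum_mul_exp]
    rw [intervalIntegral.integral_finsetSum fun q _ =>
      Continuous.intervalIntegrable (by fun_prop) _ _, Finset.mul_sum]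
    refine Finset.sum_congr rfl fun q _ => ?_
    rw [intervalIntegral.integral_finsetSum fun r _ =>
      Continuous.intervalIntegrable (by fun_prop) _ _, Finset.mul_sum]
    refine Finset.sum_congr rfl fun r _ => ?_
    rw [intervalIntegral.integral_const_mul]
    ring
  have hdiag : (∑ q ∈ s, ∑ r ∈ s, c q * conj (c r) * if ω q - ω r = 0 then 1 else 0) =
      ((∑ q ∈ s, ‖c q‖ ^ 2 : ℝ) : ℂ) := by
    push_cast
    refine Finset.sum_congr rfl fun q hq => ?_
    rw [Finset.sum_eq_single_of_mem q hq fun r hr hrq => ?_, sub_self, if_pos rfl, mul_one,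
      mul_conj']
    rw [if_neg (sub_ne_zero.2 fun h => hrq (hω hr hq h.symm)), mul_zero]
  have hlim := tendsto_finsetSum s fun q _ => tendsto_finsetSum s fun r _ =>
    (tendsto_mean_exp_mul_I (ω q - ω r)).const_mul (c q * conj (c r))
  simp_rw [← hmean, hdiag] at hlim
  simpa only [Function.comp_def, ofReal_re] using (continuous_re.tendsto _).comp hlim

theorem integrable_cexp_neg_sq_mul_exp_mul_I (θ : ℝ) :
    Integrable fun t : ℝ => cexp (-(t : ℂ) ^ 2) * cexp (θ * t * I) := by
  simp_rw [← Complex.exp_add]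
  convert integrable_cexp_quadratic (b := 1) (by simp) (θ * I) 0 using 3
  ring

theorem integral_cexp_neg_sq_mul_exp_mul_I (θ : ℝ) :
    ∫ t : ℝ, cexp (-(t : ℂ) ^ 2) * cexp (θ * t * I) = ((√π * rexp (-θ ^ 2 / 4) : ℝ) : ℂ) := by
  have h := fourierIntegral_gaussian (b := 1) (by simp) θ
  simp only [div_one, mul_one, neg_mul, one_mul] at h
  rw [show ((π : ℂ) ^ (1 / 2 : ℂ)) = ((√π : ℝ) : ℂ) by
    rw [Real.sqrt_eq_rpow, ofReal_cpow Real.pi_pos.le]; norm_num] at h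
  push_cast
  rw [← h]
  congr 1
  ext t
  rw [mul_comm]
  ring_nf

theorem integral_gaussian_mul_norm_sq_sum_mul_exp_le {ι : Type*} (s : Finset ι) (c : ι → ℂ)
    (ω : ι → ℝ) :
    ∫ t : ℝ, rexp (-t ^ 2) * ‖∑ q ∈ s, c q * cexp (ω q * t * I)‖ ^ 2 ≤
      √π * ∑ q ∈ s, ∑ r ∈ s, ‖c q‖ * ‖c r‖ * rexp (-(ω q - ω r) ^ 2 / 4) := by
  have hexpand : ((∫ t : ℝ, rexp (-t ^ 2) * ‖∑ q ∈ s, c q * cexp (ω q * t * I)‖ ^ 2 : ℝ) : ℂ) =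
      ∑ q ∈ s, ∑ r ∈ s, c q * conj (c r) * ((√π * rexp (-(ω q - ω r) ^ 2 / 4) : ℝ) : ℂ) := by
    rw [← integral_complex_ofReal]
    simp_rw [ofReal_mul, ofReal_norm_sq_sum_mul_exp, Finset.mul_sum, ofReal_exp, ofReal_neg,
      ofReal_pow]
    have hterm : ∀ q r, Integrable fun t : ℝ =>
        cexp (-(t : ℂ) ^ 2) * (c q * conj (c r) * cexp (↑(ω q - ω r) * t * I)) := fun q r => by
      simp_rw [mul_left_comm (cexp _) (c q * conj (c r))]
      exact (integrable_cexp_neg_sq_mul_exp_mul_I _).const_mul _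
    rw [integral_finsetSum _ fun q _ => integrable_finsetSum _ fun r _ => hterm q r]
    refine Finset.sum_congr rfl fun q _ => ?_
    rw [integral_finsetSum _ fun r _ => hterm q r]
    refine Finset.sum_congr rfl fun r _ => ?_
    simp_rw [mul_left_comm (cexp _) (c q * conj (c r))]
    rw [integral_const_mul, integral_cexp_neg_sq_mul_exp_mul_I]
    push_cast
    ring
  calc ∫ t : ℝ, rexp (-t ^ 2) * ‖∑ q ∈ s, c q * cexp (ω q * t * I)‖ ^ 2
      ≤ ‖((∫ t : ℝ, rexp (-t ^ 2) * ‖∑ q ∈ s, c q * cexp (ω q * t * I)‖ ^ 2 : ℝ) : ℂ)‖ := by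
        rw [norm_real]
        exact le_norm_self _
    _ ≤ ∑ q ∈ s, ∑ r ∈ s, ‖c q * conj (c r) * ((√π * rexp (-(ω q - ω r) ^ 2 / 4) : ℝ) : ℂ)‖ := by
        rw [hexpand]
        exact (norm_sum_le _ _).trans (Finset.sum_le_sum fun q _ => norm_sum_le _ _)
    _ = √π * ∑ q ∈ s, ∑ r ∈ s, ‖c q‖ * ‖c r‖ * rexp (-(ω q - ω r) ^ 2 / 4) := by
        simp only [Finset.mul_sum, norm_mul, Complex.norm_conj, norm_real,
          Real.norm_of_nonneg (Real.sqrt_nonneg _), Real.norm_of_nonneg (Real.exp_pos _).le]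
        exact Finset.sum_congr rfl fun q _ => Finset.sum_congr rfl fun r _ => by ring

theorem norm_sum_mul_exp_le {ι : Type*} (s : Finset ι) (c : ι → ℂ) (ω : ι → ℝ) (t : ℝ) :
    ‖∑ q ∈ s, c q * cexp (ω q * t * I)‖ ≤ ∑ q ∈ s, ‖c q‖ := by
  refine (norm_sum_le _ _).trans (Finset.sum_le_sum fun q _ => ?_)
  rw [norm_mul, ← ofReal_mul, norm_exp_ofReal_mul_I, mul_one]

theorem integrable_exp_neg_sq_mul_norm_sq_sum_mul_exp {ι : Type*} (s : Finset ι) (c : ι → ℂ)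
    (ω : ι → ℝ) :
    Integrable fun t : ℝ => rexp (-t ^ 2) * ‖∑ q ∈ s, c q * cexp (ω q * t * I)‖ ^ 2 := by
  refine ((integrable_exp_neg_mul_sq one_pos).const_mul ((∑ q ∈ s, ‖c q‖) ^ 2)).mono'
    (by fun_prop) (ae_of_all _ fun t => ?_)
  rw [norm_of_nonneg (by positivity), neg_one_mul, mul_comm]
  gcongr
  exact norm_sum_mul_exp_le s c ω t

theorem integral_zero_one_le_exp_one_mul_integral_exp_neg_sq_mul {f : ℝ → ℝ} (hf : Continuous f)
    (hf0 : ∀ t, 0 ≤ f t) (hfi : Integrable fun t => rexp (-t ^ 2) * f t) :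
    ∫ t in (0 : ℝ)..1, f t ≤ rexp 1 * ∫ t, rexp (-t ^ 2) * f t := by
  calc ∫ t in (0 : ℝ)..1, f t ≤ ∫ t in (0 : ℝ)..1, rexp 1 * (rexp (-t ^ 2) * f t) := by
        refine intervalIntegral.integral_mono_on zero_le_one (hf.intervalIntegrable _ _)
          (Continuous.intervalIntegrable (by fun_prop) _ _) fun t ht => ?_
        have hweight : 1 ≤ rexp 1 * rexp (-t ^ 2) := by
          rw [← Real.exp_add]
          exact Real.one_le_exp (by nlinarith [ht.1, ht.2])
        nlinarith [hf0 t]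
    _ = rexp 1 * ∫ t in (0 : ℝ)..1, rexp (-t ^ 2) * f t := intervalIntegral.integral_const_mul _ _
    _ ≤ rexp 1 * ∫ t, rexp (-t ^ 2) * f t := by
        gcongr
        rw [intervalIntegral.integral_of_le zero_le_one]
        exact setIntegral_le_integral hfi (ae_of_all _ fun t => mul_nonneg (exp_pos _).le (hf0 t))

theorem sum_sum_mul_mul_le_of_sum_le {ι : Type*} (s : Finset ι) {K : ι → ι → ℝ}
    (hK : ∀ q r, 0 ≤ K q r) (hK_symm : ∀ q r, K q r = K r q) {R : ℝ}
    (hR : ∀ q ∈ s, ∑ r ∈ s, K q r ≤ R) (u : ι → ℝ) :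
    ∑ q ∈ s, ∑ r ∈ s, u q * u r * K q r ≤ R * ∑ q ∈ s, u q ^ 2 := by
  have hswap : ∑ q ∈ s, ∑ r ∈ s, u r ^ 2 * K q r = ∑ q ∈ s, ∑ r ∈ s, u q ^ 2 * K q r := by
    rw [Finset.sum_comm]
    exact Finset.sum_congr rfl fun q _ => Finset.sum_congr rfl fun r _ => by rw [hK_symm]
  have hamgm : 2 * ∑ q ∈ s, ∑ r ∈ s, u q * u r * K q r ≤
      ∑ q ∈ s, ∑ r ∈ s, u q ^ 2 * K q r + ∑ q ∈ s, ∑ r ∈ s, u r ^ 2 * K q r := by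
    simp_rw [Finset.mul_sum, ← Finset.sum_add_distrib]
    gcongr with q _ r _
    nlinarith [mul_nonneg (sq_nonneg (u q - u r)) (hK q r)]
  calc ∑ q ∈ s, ∑ r ∈ s, u q * u r * K q r ≤ ∑ q ∈ s, u q ^ 2 * ∑ r ∈ s, K q r := by
        simp_rw [Finset.mul_sum]
        linarith
    _ ≤ ∑ q ∈ s, u q ^ 2 * R := by
        gcongr with q hq
        exact hR q hq
    _ = R * ∑ q ∈ s, u q ^ 2 := by rw [← Finset.sum_mul, mul_comm]

/-- `√π · gaussianGramKernel q r = ∫ e^{-t²} q^{-1/2-it} conj (r^{-1/2-it}) dt`. -/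
noncomputable def gaussianGramKernel (q r : ℕ) : ℝ :=
  rexp (-(Real.log q - Real.log r) ^ 2 / 4) * (q : ℝ) ^ (-1 / 2 : ℝ) * (r : ℝ) ^ (-1 / 2 : ℝ)

theorem gaussianGramKernel_nonneg (q r : ℕ) : 0 ≤ gaussianGramKernel q r := by
  unfold gaussianGramKernel
  positivity

theorem gaussianGramKernel_comm (q r : ℕ) : gaussianGramKernel q r = gaussianGramKernel r q := by
  unfold gaussianGramKernel
  ring_nf

theorem gaussianGramKernel_le {q r : ℕ} (hq : 0 < q) (hr : 0 < r) :
    gaussianGramKernel q r ≤ rexp (9 / 4) * r / q ^ 2 := by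
  have hq' : (0 : ℝ) < q := Nat.cast_pos.2 hq
  have hr' : (0 : ℝ) < r := Nat.cast_pos.2 hr
  calc gaussianGramKernel q r
      = rexp (-(Real.log q - Real.log r) ^ 2 / 4 - Real.log q / 2 - Real.log r / 2) := by
        rw [gaussianGramKernel, rpow_def_of_pos hq', rpow_def_of_pos hr', ← Real.exp_add,
          ← Real.exp_add]
        ring_nf
    _ ≤ rexp (9 / 4 + Real.log r - 2 * Real.log q) :=
        Real.exp_le_exp.2 (by nlinarith [sq_nonneg ((Real.log q - Real.log r) / 2 - 3 / 2)])
    _ = rexp (9 / 4) * r / q ^ 2 := by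
        rw [Real.exp_sub, Real.exp_add, Real.exp_log hr', ← Real.log_rpow hq',
          Real.exp_log (by positivity)]
        norm_cast

theorem sum_gaussianGramKernel_le {s : Finset ℕ} (hs : 0 ∉ s) {q : ℕ} (hq : 0 < q) :
    ∑ r ∈ s, gaussianGramKernel q r ≤ 3 * rexp (9 / 4) := by
  have hq' : (0 : ℝ) < q := Nat.cast_pos.2 hq
  have hpos : ∀ r ∈ s, 0 < r := fun r hr => Nat.pos_of_ne_zero (ne_of_mem_of_not_mem hr hs)
  have hsmall : ∑ r ∈ s.filter (· ≤ q), gaussianGramKernel q r ≤ rexp (9 / 4) := by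
    have hcard : (s.filter (· ≤ q)).card ≤ q := by
      simpa using Finset.card_le_card (s := s.filter (· ≤ q)) (t := Finset.Ioc 0 q)
        fun r hr => Finset.mem_Ioc.2
          ⟨hpos r (Finset.mem_filter.1 hr).1, (Finset.mem_filter.1 hr).2⟩
    calc ∑ r ∈ s.filter (· ≤ q), gaussianGramKernel q r
        ≤ ∑ r ∈ s.filter (· ≤ q), rexp (9 / 4) / q := by
          refine Finset.sum_le_sum fun r hr => ?_
          obtain ⟨hrs, hrq⟩ := Finset.mem_filter.1 hr
          calc gaussianGramKernel q r ≤ rexp (9 / 4) * r / q ^ 2 :=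
                gaussianGramKernel_le hq (hpos r hrs)
            _ ≤ rexp (9 / 4) * q / q ^ 2 := by gcongr
            _ = rexp (9 / 4) / q := by field_simp
      _ = (s.filter (· ≤ q)).card * (rexp (9 / 4) / q) := by rw [Finset.sum_const, nsmul_eq_mul]
      _ ≤ q * (rexp (9 / 4) / q) := by gcongr
      _ = rexp (9 / 4) := by field_simp
  have hlarge : ∑ r ∈ s.filter (¬ · ≤ q), gaussianGramKernel q r ≤ 2 * rexp (9 / 4) := by
    calc ∑ r ∈ s.filter (¬ · ≤ q), gaussianGramKernel q r
        ≤ ∑ r ∈ s.filter (¬ · ≤ q), rexp (9 / 4) * q * ((r : ℝ) ^ 2)⁻¹ := by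
          refine Finset.sum_le_sum fun r hr => ?_
          rw [gaussianGramKernel_comm, ← div_eq_mul_inv]
          exact gaussianGramKernel_le (hpos r (Finset.mem_filter.1 hr).1) hq
      _ ≤ ∑ r ∈ Finset.Ioo q (s.sup id + 1), rexp (9 / 4) * q * ((r : ℝ) ^ 2)⁻¹ := by
          refine Finset.sum_le_sum_of_subset_of_nonneg (fun r hr => ?_) fun _ _ _ => by positivity
          obtain ⟨hrs, hrq⟩ := Finset.mem_filter.1 hr
          exact Finset.mem_Ioo.2 ⟨not_le.1 hrq, Nat.lt_succ_of_le (Finset.le_sup (f := id) hrs)⟩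
      _ ≤ rexp (9 / 4) * q * (2 / (q + 1)) := by
          rw [← Finset.mul_sum]
          gcongr
          exact sum_Ioo_inv_sq_le _ _
      _ ≤ 2 * rexp (9 / 4) := by
          rw [mul_div_assoc', div_le_iff₀ (by positivity)]
          nlinarith [Real.exp_pos (9 / 4)]
  rw [← Finset.sum_filter_add_sum_filter_not s (· ≤ q)]
  linarith

theorem tendsto_mean_norm_sq_dirichletPoly {s : Finset ℕ} (hs : 0 ∉ s) (a : ℕ → ℂ) :
    Tendsto (fun T : ℝ => 1 / (2 * T) * ∫ t in (-T)..T, ‖dirichletPoly s a (t * I)‖ ^ 2) atTop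
      (𝓝 (∑ n ∈ s, ‖a n‖ ^ 2)) := by
  have hlog : Set.InjOn (fun n : ℕ => -Real.log n) s := fun m hm n hn hmn => by
    have hpos : ∀ n ∈ s, (0 : ℝ) < n := fun n hn =>
      Nat.cast_pos.2 (Nat.pos_of_ne_zero (ne_of_mem_of_not_mem hn hs))
    exact_mod_cast Real.log_injOn_pos (hpos m hm) (hpos n hn) (neg_inj.1 hmn)
  have hD : ∀ t : ℝ, dirichletPoly s a (t * I) = ∑ n ∈ s, a n * cexp (↑(-Real.log n) * t * I) :=
    fun t => by simpa only [zero_add, neg_zero, cpow_zero, mul_one] using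
      dirichletPoly_add_mul_I hs a 0 t
  simp_rw [hD]
  exact tendsto_mean_norm_sq_sum_mul_exp s a hlog

theorem integral_norm_sq_dirichletPoly_half_le {s : Finset ℕ} (hs : 0 ∉ s) (a : ℕ → ℂ) :
    ∫ t in (0 : ℝ)..1, ‖dirichletPoly s a (1 / 2 + t * I)‖ ^ 2 ≤
      rexp 1 * √π * (3 * rexp (9 / 4)) * ∑ n ∈ s, ‖a n‖ ^ 2 := by
  set c : ℕ → ℂ := fun n => a n * (n : ℂ) ^ (-(1 / 2 : ℂ))
  set ω : ℕ → ℝ := fun n => -Real.log n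
  have hpos : ∀ n ∈ s, 0 < n := fun n hn => Nat.pos_of_ne_zero (ne_of_mem_of_not_mem hn hs)
  have hkernel : ∀ q ∈ s, ∀ r ∈ s, ‖c q‖ * ‖c r‖ * rexp (-(ω q - ω r) ^ 2 / 4) =
      ‖a q‖ * ‖a r‖ * gaussianGramKernel q r := fun q hq r hr => by
    simp only [c, ω, gaussianGramKernel, norm_mul, norm_natCast_cpow_of_pos (hpos q hq),
      norm_natCast_cpow_of_pos (hpos r hr)]
    norm_num
    ring_nf
  calc ∫ t in (0 : ℝ)..1, ‖dirichletPoly s a (1 / 2 + t * I)‖ ^ 2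
      = ∫ t in (0 : ℝ)..1, ‖∑ n ∈ s, c n * cexp (ω n * t * I)‖ ^ 2 := by
        simp_rw [dirichletPoly_add_mul_I hs]
        rfl
    _ ≤ rexp 1 * ∫ t, rexp (-t ^ 2) * ‖∑ n ∈ s, c n * cexp (ω n * t * I)‖ ^ 2 :=
        integral_zero_one_le_exp_one_mul_integral_exp_neg_sq_mul (by fun_prop)
          (fun _ => by positivity) (integrable_exp_neg_sq_mul_norm_sq_sum_mul_exp s c ω)
    _ ≤ rexp 1 * (√π * ∑ q ∈ s, ∑ r ∈ s, ‖c q‖ * ‖c r‖ * rexp (-(ω q - ω r) ^ 2 / 4)) := by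
        gcongr
        exact integral_gaussian_mul_norm_sq_sum_mul_exp_le s c ω
    _ = rexp 1 * √π * ∑ q ∈ s, ∑ r ∈ s, ‖a q‖ * ‖a r‖ * gaussianGramKernel q r := by
        rw [mul_assoc]
        congr 2
        exact Finset.sum_congr rfl fun q hq => Finset.sum_congr rfl fun r hr => hkernel q hq r hr
    _ ≤ rexp 1 * √π * (3 * rexp (9 / 4) * ∑ n ∈ s, ‖a n‖ ^ 2) := by
        gcongr
        exact sum_sum_mul_mul_le_of_sum_le s gaussianGramKernel_nonneg gaussianGramKernel_comm
          (fun q hq => sum_gaussianGramKernel_le hs (hpos q hq)) _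
    _ = rexp 1 * √π * (3 * rexp (9 / 4)) * ∑ n ∈ s, ‖a n‖ ^ 2 := by ring

theorem embedding_even_integer_general (k : ℕ) :
    ∃ C : ℝ, ∀ (N : ℕ) (a : ℕ → ℂ) (M : ℝ),
      Tendsto (fun T : ℝ => (1 / (2 * T)) *
          ∫ t in (-T)..T,
            ‖∑ n ∈ Finset.Icc 1 N, a n * (n : ℂ) ^ (-((t : ℂ) * I))‖ ^ (2 * k))
        atTop (nhds M) →
      (∫ t in (0:ℝ)..1,
          ‖∑ n ∈ Finset.Icc 1 N, a n * (n : ℂ) ^ (-((1 / 2 : ℂ) + t * I))‖ ^ (2 * k)) ≤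
        C * M := by
  refine ⟨rexp 1 * √π * (3 * rexp (9 / 4)), fun N a M hM => ?_⟩
  obtain ⟨b, hb⟩ := exists_dirichletPoly_pow_eq (Finset.Icc 1 N) a k
  have hs : 0 ∉ Finset.Icc 1 N ^ k := zero_notMem_pow (by simp) k
  have hnorm : ∀ z, ‖∑ n ∈ Finset.Icc 1 N, a n * (n : ℂ) ^ (-z)‖ ^ (2 * k) =
      ‖dirichletPoly (Finset.Icc 1 N ^ k) b z‖ ^ 2 := fun z => by
    rw [pow_mul', ← norm_pow, ← hb]
    rfl
  simp_rw [hnorm] at hM ⊢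
  rw [tendsto_nhds_unique hM (tendsto_mean_norm_sq_dirichletPoly hs b)]
  exact integral_norm_sq_dirichletPoly_half_le hs b

/-- The embedding for `p = 2k` an even integer: there is a constant `C_p` such that for
every finite Dirichlet polynomial `f`, `∫_0^1 |f(1/2+it)|^p dt ≤ C_p ‖f‖_{𝓗^p}^p`, where
`‖f‖_{𝓗^p}^p = lim_{T→∞} (1/(2T)) ∫_{-T}^T |f(it)|^p dt` (the limit `M` below). -/
theorem embedding_even_integer (k : ℕ) (hk : 0 < k) :
    ∃ C : ℝ, ∀ (N : ℕ) (a : ℕ → ℂ) (M : ℝ),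
      Tendsto (fun T : ℝ => (1 / (2 * T)) *
          ∫ t in (-T)..T,
            ‖∑ n ∈ Finset.Icc 1 N, a n * (n : ℂ) ^ (-((t : ℂ) * I))‖ ^ (2 * k))
        atTop (nhds M) →
      (∫ t in (0:ℝ)..1,
          ‖∑ n ∈ Finset.Icc 1 N, a n * (n : ℂ) ^ (-((1 / 2 : ℂ) + t * I))‖ ^ (2 * k)) ≤
        C * M :=
  embedding_even_integer_general k
end
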